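/- arXiv:0710.5594 — 2 statements merged into one kernel-verified Lean document; each statement's English description precedes it below -/
import Mathlib

section
/- Let q ∈ I := (−∞,0) ∪ (1,∞). If (β,Y) ∈ A_q and (β′,Y′) ∈ A_q both minimize k_q over A_q, then cβ = cβ′ and Y = Y′ K-almost everywhere. -/
/-!
For `q ∈ I` the factor `q(q-1)` is positive and `g_q` is strictly convex on `(0,∞)`, so `k_q` is
convex on the convex set `A_q`. At a convex combination `t(β,Y) + s(β',Y')` of admissible pairs,
`k_q` equals `t k_q(β,Y) + s k_q(β',Y')` minus two nonnegative defects: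
`ts · q(q-1)/2 · ⟪β-β', c(β-β')⟫` and the integral of the Jensen gap of `g_q` at `(Y, Y')`.
When both pairs are minimizers their midpoint cannot do better, so both defects vanish: positive
semidefiniteness of `c` then gives `c(β-β') = 0`, and strict convexity of `g_q` gives `Y = Y'`
`K`-a.e.
-/

open MeasureTheory
open scoped ENNReal RealInnerProductSpace

noncomputable section

/-- `ℝ^d` with the Euclidean norm. -/
abbrev E (d : ℕ) := EuclideanSpace ℝ (Fin d)

/-- The truncation function `h(x) = x · 1_{‖x‖ ≤ 1}`. -/
def trunc {d : ℕ} (x : E d) : E d := if ‖x‖ ≤ 1 then x else 0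

/-- Action of a `d × d` matrix on a vector of `ℝ^d`. -/
def mv {d : ℕ} (c : Matrix (Fin d) (Fin d) ℝ) (v : E d) : E d :=
  (WithLp.equiv 2 (Fin d → ℝ)).symm (c.mulVec (WithLp.equiv 2 (Fin d → ℝ) v))

/-- `K` is a Lévy measure: `K({0}) = 0` and `∫ min(1,‖x‖²) K(dx) < ∞`. -/
def IsLevyMeasure {d : ℕ} (K : Measure (E d)) : Prop :=
  K {0} = 0 ∧ ∫⁻ x, ENNReal.ofReal (min 1 (‖x‖ ^ 2)) ∂K < ⊤

/-- `g_q(y) = y^q - 1 - q(y-1)` (real exponent `q`). -/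
def gq (q y : ℝ) : ℝ := y ^ q - 1 - q * (y - 1)

/-- `k_q(β, Y) = (q(q-1)/2) βᵀcβ + ∫ g_q(Y(x)) K(dx)`. -/
def kq {d : ℕ} (q : ℝ) (c : Matrix (Fin d) (Fin d) ℝ) (K : Measure (E d))
    (β : E d) (Y : E d → ℝ) : ℝ :=
  q * (q - 1) / 2 * ⟪β, mv c β⟫ + ∫ x, gq q (Y x) ∂K

/-- The martingale condition `(M)`:
`∫ ‖x Y(x) - h(x)‖ K(dx) < ∞` and `b + cβ + ∫ (x Y(x) - h(x)) K(dx) = 0`. -/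
def MCond {d : ℕ} (b : E d) (c : Matrix (Fin d) (Fin d) ℝ) (K : Measure (E d))
    (β : E d) (Y : E d → ℝ) : Prop :=
  Integrable (fun x => Y x • x - trunc x) K ∧
  b + mv c β + ∫ x, (Y x • x - trunc x) ∂K = 0

/-- Membership in the admissible set `A_q`: `Y` is measurable, `Y > 0` `K`-a.e.
(recall that functions which agree `K`-a.e. are identified), `(β,Y)` satisfies the
martingale condition `(M)`, and `∫ g_q(Y(x)) K(dx) < ∞`, i.e. `k_q(β,Y) < ∞`. -/
def memA {d : ℕ} (q : ℝ) (b : E d) (c : Matrix (Fin d) (Fin d) ℝ)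
    (K : Measure (E d)) (β : E d) (Y : E d → ℝ) : Prop :=
  Measurable Y ∧ (∀ᵐ x ∂K, 0 < Y x) ∧ MCond b c K β Y ∧
  ∫⁻ x, ENNReal.ofReal (gq q (Y x)) ∂K < ⊤

open Set

lemma ConvexOn.add_mul_sub_le_of_hasDerivAt {S : Set ℝ} {f : ℝ → ℝ} {x y f' : ℝ}
    (hf : ConvexOn ℝ S f) (hx : x ∈ S) (hy : y ∈ S) (hfx : HasDerivAt f f' x) :
    f x + f' * (y - x) ≤ f y := by
  rcases lt_trichotomy x y with hxy | rfl | hyx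
  · have h := hf.le_slope_of_hasDerivAt hx hy hxy hfx
    rw [slope_def_field, le_div_iff₀ (sub_pos.2 hxy)] at h
    linarith
  · simp
  · have h := hf.slope_le_of_hasDerivAt hy hx hyx hfx
    rw [slope_def_field, div_le_iff₀ (sub_pos.2 hyx)] at h
    linarith

lemma strictConvexOn_rpow_of_neg {p : ℝ} (hp : p < 0) :
    StrictConvexOn ℝ (Ioi 0) fun x : ℝ => x ^ p := by
  refine StrictMonoOn.strictConvexOn_of_deriv (convex_Ioi 0)
    (fun x hx => (Real.continuousAt_rpow_const x p (.inl hx.ne')).continuousWithinAt) ?_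
  rw [interior_Ioi, Real.deriv_rpow_const']
  exact fun x hx y _ hxy =>
    mul_lt_mul_of_neg_left (Real.rpow_lt_rpow_of_neg hx hxy (by linarith)) hp

lemma strictConvexOn_rpow_Ioi {q : ℝ} (hq : q < 0 ∨ 1 < q) :
    StrictConvexOn ℝ (Ioi 0) fun x : ℝ => x ^ q :=
  hq.elim strictConvexOn_rpow_of_neg fun hq =>
    (strictConvexOn_rpow hq).subset Ioi_subset_Ici_self (convex_Ioi 0)

lemma strictConvexOn_gq {q : ℝ} (hq : q < 0 ∨ 1 < q) : StrictConvexOn ℝ (Ioi 0) (gq q) := by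
  refine ⟨convex_Ioi 0, fun x hx y hy hxy a b ha hb hab => ?_⟩
  have h := (strictConvexOn_rpow_Ioi hq).2 hx hy hxy ha hb hab
  simp only [gq, smul_eq_mul] at h ⊢
  linear_combination h + (1 - q) * hab

lemma gq_nonneg {q : ℝ} (hq : q < 0 ∨ 1 < q) {y : ℝ} (hy : 0 < y) : 0 ≤ gq q y := by
  have h := (strictConvexOn_rpow_Ioi hq).convexOn.add_mul_sub_le_of_hasDerivAt
    (mem_Ioi.2 one_pos) (mem_Ioi.2 hy) (Real.hasDerivAt_rpow_const (.inl one_ne_zero))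
  simp only [Real.one_rpow, mul_one] at h
  unfold gq
  linarith

lemma measurable_gq (q : ℝ) : Measurable (gq q) := by
  unfold gq
  fun_prop

lemma LinearMap.IsSymmetric.inner_map_convexComb {F : Type*} [NormedAddCommGroup F]
    [InnerProductSpace ℝ F] {T : F →ₗ[ℝ] F} (hT : T.IsSymmetric) (u v : F) {t s : ℝ}
    (hts : t + s = 1) :
    ⟪t • u + s • v, T (t • u + s • v)⟫ =
      t * ⟪u, T u⟫ + s * ⟪v, T v⟫ - t * s * ⟪u - v, T (u - v)⟫ := by
  have huv : ⟪v, T u⟫ = ⟪u, T v⟫ := by rw [← hT, real_inner_comm]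
  simp only [map_add, map_sub, map_smul, inner_add_left, inner_add_right, inner_sub_left,
    inner_sub_right, real_inner_smul_left, real_inner_smul_right, huv]
  obtain rfl : s = 1 - t := by linarith
  ring

lemma mv_eq_toEuclideanLin {d : ℕ} (c : Matrix (Fin d) (Fin d) ℝ) :
    mv c = Matrix.toEuclideanLin c := rfl

lemma mv_sub {d : ℕ} (c : Matrix (Fin d) (Fin d) ℝ) (u v : E d) :
    mv c (u - v) = mv c u - mv c v :=
  map_sub (Matrix.toEuclideanLin c) u v

lemma inner_mv_self_nonneg {d : ℕ} {c : Matrix (Fin d) (Fin d) ℝ} (hc : c.PosSemidef) (v : E d) :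
    0 ≤ ⟪v, mv c v⟫ :=
  (Matrix.isPositive_toEuclideanLin_iff.2 hc).inner_nonneg_right v

lemma mv_eq_zero_of_inner_mv_self_eq_zero {d : ℕ} {c : Matrix (Fin d) (Fin d) ℝ}
    (hc : c.PosSemidef) {v : E d} (hv : ⟪v, mv c v⟫ = 0) : mv c v = 0 := by
  have hcv : c.mulVec (WithLp.ofLp v) = 0 := (hc.dotProduct_mulVec_zero_iff _).1 <| by
    simpa [mv, EuclideanSpace.inner_eq_star_dotProduct, dotProduct_comm] using hv
  simp [mv, hcv]

section Integrals

variable {α : Type*} [MeasurableSpace α] {μ : Measure α} {Y Y' : α → ℝ} {t s : ℝ}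

lemma ConvexOn.integral_convexComb_gap_nonneg {S : Set ℝ} {f : ℝ → ℝ} (hf : ConvexOn ℝ S f)
    (hY : ∀ᵐ x ∂μ, Y x ∈ S) (hY' : ∀ᵐ x ∂μ, Y' x ∈ S) (ht : 0 ≤ t) (hs : 0 ≤ s)
    (hts : t + s = 1) :
    0 ≤ ∫ x, (t * f (Y x) + s * f (Y' x) - f (t * Y x + s * Y' x)) ∂μ := by
  refine integral_nonneg_of_ae ?_
  filter_upwards [hY, hY'] with x hx hx'
  simpa using hf.2 hx hx' ht hs hts

lemma StrictConvexOn.ae_eq_of_integral_convexComb_gap_eq_zero {S : Set ℝ} {f : ℝ → ℝ}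
    (hf : StrictConvexOn ℝ S f) (hY : ∀ᵐ x ∂μ, Y x ∈ S) (hY' : ∀ᵐ x ∂μ, Y' x ∈ S)
    (ht : 0 < t) (hs : 0 < s) (hts : t + s = 1)
    (hint : Integrable (fun x => t * f (Y x) + s * f (Y' x) - f (t * Y x + s * Y' x)) μ)
    (h0 : ∫ x, (t * f (Y x) + s * f (Y' x) - f (t * Y x + s * Y' x)) ∂μ = 0) :
    ∀ᵐ x ∂μ, Y x = Y' x := by
  have hgap : ∀ᵐ x ∂μ, 0 ≤ t * f (Y x) + s * f (Y' x) - f (t * Y x + s * Y' x) := by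
    filter_upwards [hY, hY'] with x hx hx'
    simpa using hf.convexOn.2 hx hx' ht.le hs.le hts
  filter_upwards [(integral_eq_zero_iff_of_nonneg_ae hgap hint).1 h0, hY, hY'] with x hx0 hx hx'
  by_contra hne
  have hlt := hf.2 hx hx' hne ht hs hts
  simp only [smul_eq_mul, Pi.zero_apply] at hlt hx0
  linarith

variable {q : ℝ}

lemma integrable_gq_comp_iff (hq : q < 0 ∨ 1 < q) (hY : Measurable Y)
    (hpos : ∀ᵐ x ∂μ, 0 < Y x) :
    Integrable (fun x => gq q (Y x)) μ ↔ ∫⁻ x, ENNReal.ofReal (gq q (Y x)) ∂μ < ⊤ := by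
  have hm : Measurable fun x => gq q (Y x) := (measurable_gq q).comp hY
  rw [Integrable, and_iff_right hm.aestronglyMeasurable,
    hasFiniteIntegral_iff_ofReal (hpos.mono fun x hx => gq_nonneg hq hx)]

lemma integrable_gq_convexComb (hq : q < 0 ∨ 1 < q) (hYm : Measurable Y) (hY'm : Measurable Y')
    (hpos : ∀ᵐ x ∂μ, 0 < Y x) (hpos' : ∀ᵐ x ∂μ, 0 < Y' x)
    (hi : Integrable (fun x => gq q (Y x)) μ) (hi' : Integrable (fun x => gq q (Y' x)) μ)
    (ht : 0 ≤ t) (hs : 0 ≤ s) (hts : t + s = 1) :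
    Integrable (fun x => gq q (t * Y x + s * Y' x)) μ := by
  refine ((hi.const_mul t).add (hi'.const_mul s)).mono'
    ((measurable_gq q).comp (by fun_prop)).aestronglyMeasurable ?_
  filter_upwards [hpos, hpos'] with x hx hx'
  have hmem : t * Y x + s * Y' x ∈ Ioi 0 := convex_Ioi 0 hx hx' ht hs hts
  rw [Real.norm_eq_abs, abs_of_nonneg (gq_nonneg hq hmem)]
  simpa using (strictConvexOn_gq hq).convexOn.2 hx hx' ht hs hts

end Integrals

section Admissible

variable {d : ℕ} {q : ℝ} {b : E d} {c : Matrix (Fin d) (Fin d) ℝ} {K : Measure (E d)}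
  {β β' : E d} {Y Y' : E d → ℝ} {t s : ℝ}

lemma memA.integrable_gq (hq : q < 0 ∨ 1 < q) (h : memA q b c K β Y) :
    Integrable (fun x => gq q (Y x)) K :=
  (integrable_gq_comp_iff hq h.1 h.2.1).2 h.2.2.2

lemma memA.convexComb (hq : q < 0 ∨ 1 < q) (h : memA q b c K β Y) (h' : memA q b c K β' Y')
    (ht : 0 ≤ t) (hs : 0 ≤ s) (hts : t + s = 1) :
    memA q b c K (t • β + s • β') (fun x => t * Y x + s * Y' x) := by
  have hg := h.integrable_gq hq
  have hg' := h'.integrable_gq hq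
  obtain ⟨hYm, hpos, ⟨hI, hM⟩, -⟩ := h
  obtain ⟨hY'm, hpos', ⟨hI', hM'⟩, -⟩ := h'
  have hpos_comb : ∀ᵐ x ∂K, 0 < t * Y x + s * Y' x := by
    filter_upwards [hpos, hpos'] with x hx hx'
    simpa using convex_Ioi (0 : ℝ) hx hx' ht hs hts
  have hsplit : (fun x => (t * Y x + s * Y' x) • x - trunc x) =
      fun x => t • (Y x • x - trunc x) + s • (Y' x • x - trunc x) := by
    funext x
    linear_combination (norm := module) hts • trunc x
  have hIt : Integrable (fun x => t • (Y x • x - trunc x)) K := hI.smul t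
  have hIs : Integrable (fun x => s • (Y' x • x - trunc x)) K := hI'.smul s
  refine ⟨by fun_prop, hpos_comb, ⟨hsplit ▸ hIt.add hIs, ?_⟩,
    (integrable_gq_comp_iff hq (by fun_prop) hpos_comb).1 <|
      integrable_gq_convexComb hq hYm hY'm hpos hpos' hg hg' ht hs hts⟩
  · rw [hsplit, integral_add hIt hIs, integral_smul, integral_smul,
      mv_eq_toEuclideanLin, map_add, map_smul, map_smul, ← mv_eq_toEuclideanLin]
    linear_combination (norm := module) t • hM + s • hM' - hts • b

lemma kq_convexComb (hq : q < 0 ∨ 1 < q) (hc : c.IsHermitian) (h : memA q b c K β Y)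
    (h' : memA q b c K β' Y') (ht : 0 ≤ t) (hs : 0 ≤ s) (hts : t + s = 1) :
    kq q c K (t • β + s • β') (fun x => t * Y x + s * Y' x) =
      t * kq q c K β Y + s * kq q c K β' Y' -
        (t * s * (q * (q - 1) / 2 * ⟪β - β', mv c (β - β')⟫) +
          ∫ x, (t * gq q (Y x) + s * gq q (Y' x) - gq q (t * Y x + s * Y' x)) ∂K) := by
  have hg := h.integrable_gq hq
  have hg' := h'.integrable_gq hq
  have hgc := (h.convexComb hq h' ht hs hts).integrable_gq hq
  have hsum : Integrable (fun x => t * gq q (Y x) + s * gq q (Y' x)) K :=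
    (hg.const_mul t).add (hg'.const_mul s)
  rw [integral_sub hsum hgc,
    integral_add (hg.const_mul t) (hg'.const_mul s), integral_const_mul, integral_const_mul]
  simp only [kq, mv_eq_toEuclideanLin]
  rw [(Matrix.isSymmetric_toEuclideanLin_iff.2 hc).inner_map_convexComb β β' hts]
  ring

lemma eq_of_convexComb_le_kq (hq : q < 0 ∨ 1 < q) (hc : c.PosSemidef) (h : memA q b c K β Y)
    (h' : memA q b c K β' Y') (ht : 0 < t) (hs : 0 < s) (hts : t + s = 1)
    (hle : t * kq q c K β Y + s * kq q c K β' Y' ≤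
      kq q c K (t • β + s • β') (fun x => t * Y x + s * Y' x)) :
    mv c β = mv c β' ∧ ∀ᵐ x ∂K, Y x = Y' x := by
  rw [kq_convexComb hq hc.1 h h' ht.le hs.le hts] at hle
  have hpos : ∀ᵐ x ∂K, Y x ∈ Ioi 0 := h.2.1
  have hpos' : ∀ᵐ x ∂K, Y' x ∈ Ioi 0 := h'.2.1
  have hQ := inner_mv_self_nonneg hc (β - β')
  have hG := (strictConvexOn_gq hq).convexOn.integral_convexComb_gap_nonneg hpos hpos'
    ht.le hs.le hts
  have hqq : 0 < q * (q - 1) / 2 := by rcases hq with hq | hq <;> nlinarith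
  have hts' : 0 < t * s := mul_pos ht hs
  refine ⟨?_, ?_⟩
  · have hQ0 : ⟪β - β', mv c (β - β')⟫ = 0 := by nlinarith [mul_pos hts' hqq]
    rw [← sub_eq_zero, ← mv_sub]
    exact mv_eq_zero_of_inner_mv_self_eq_zero hc hQ0
  · refine (strictConvexOn_gq hq).ae_eq_of_integral_convexComb_gap_eq_zero hpos hpos' ht hs hts
      ?_ (by nlinarith [mul_pos hts' hqq])
    exact (((h.integrable_gq hq).const_mul t).add ((h'.integrable_gq hq).const_mul s)).sub
      ((h.convexComb hq h' ht.le hs.le hts).integrable_gq hq)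

end Admissible

theorem stmt1_general (d : ℕ) (q : ℝ) (hq : q < 0 ∨ 1 < q)
    (b : E d) (c : Matrix (Fin d) (Fin d) ℝ) (hpsd : c.PosSemidef)
    (K : Measure (E d))
    (β : E d) (Y : E d → ℝ) (β' : E d) (Y' : E d → ℝ)
    (hmem : memA q b c K β Y) (hmem' : memA q b c K β' Y')
    (hmin : ∀ β'' Y'', memA q b c K β'' Y'' → kq q c K β Y ≤ kq q c K β'' Y'')
    (hmin' : ∀ β'' Y'', memA q b c K β'' Y'' → kq q c K β' Y' ≤ kq q c K β'' Y'') :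
    mv c β = mv c β' ∧ ∀ᵐ x ∂K, Y x = Y' x := by
  have hk : kq q c K β' Y' = kq q c K β Y := le_antisymm (hmin' β Y hmem) (hmin β' Y' hmem')
  have hhalf : (2⁻¹ : ℝ) + 2⁻¹ = 1 := by norm_num
  refine eq_of_convexComb_le_kq hq hpsd hmem hmem' (by norm_num) (by norm_num) hhalf ?_
  calc 2⁻¹ * kq q c K β Y + 2⁻¹ * kq q c K β' Y' = kq q c K β Y := by rw [hk]; ring
    _ ≤ _ := hmin _ _ (hmem.convexComb hq hmem' (by norm_num) (by norm_num) hhalf)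

/-- **Uniqueness of the minimizer of `(P_q)`**: if `(β,Y)` and `(β',Y')` both
minimize `k_q` over `A_q`, then `cβ = cβ'` and `Y = Y'` `K`-a.e. -/
theorem stmt1 (d : ℕ) (hd : 1 ≤ d) (q : ℝ) (hq : q < 0 ∨ 1 < q)
    (b : E d) (c : Matrix (Fin d) (Fin d) ℝ) (hsym : c.IsSymm) (hpsd : c.PosSemidef)
    (K : Measure (E d)) (hK : IsLevyMeasure K)
    (β : E d) (Y : E d → ℝ) (β' : E d) (Y' : E d → ℝ)
    (hmem : memA q b c K β Y) (hmem' : memA q b c K β' Y')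
    (hmin : ∀ β'' Y'', memA q b c K β'' Y'' → kq q c K β Y ≤ kq q c K β'' Y'')
    (hmin' : ∀ β'' Y'', memA q b c K β'' Y'' → kq q c K β' Y' ≤ kq q c K β'' Y'') :
    mv c β = mv c β' ∧ ∀ᵐ x ∂K, Y x = Y' x :=
  stmt1_general d q hq b c hpsd K β Y β' Y' hmem hmem' hmin hmin'
end
end

section
/- Let q = 2, assume ∫ ‖x‖² K(dx) < ∞ and c = 0. Suppose (β₂, Y₂) ∈ A_2 minimizes k_2 over A_2 and that condition (D) holds: the set H¹(Y₂) := { Ψ ∈ L²(K) : ∫ Ψ(x)·x K(dx) = 0 ∈ ℝ^d and |Ψ(x)| ≤ a·Y₂(x) K-a.e. for some a > 0 } is L²(K)-dense in H² := { Ψ ∈ L²(K) : ∫ Ψ(x)·x K(dx) = 0 ∈ ℝ^d }. Then there exists α ∈ ℝ^d such that Y₂(x) = αᵀx + 1 for K-almost every x; in particular condition (C_2) holds with λ̃_2 = α. -/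
open MeasureTheory
open scoped ENNReal RealInnerProductSpace

noncomputable section

/-! Perturbing `Y₂` to `Y₂ + tΦ` with `Φ ∈ H¹(Y₂)` keeps the pair admissible for small `|t|`:
the bound `|Φ| ≤ a Y₂` preserves positivity and `∫ Φ(x) x K(dx) = 0` preserves `(M)`. Since
`k₂` is quadratic in `t`, minimality at `t = 0` makes `Y₂ - 1` orthogonal to `H¹(Y₂)` in
`L²(K)`, hence by `(D)` to `H²`. But `H²` is the orthogonal complement of the
finite-dimensional space of linear functions `x ↦ ⟪α, x⟫`, so `Y₂ - 1` lies in that space. -/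

open Filter Topology

section L2

variable {Ω : Type*} [MeasurableSpace Ω] {μ : Measure Ω}

theorem memLp_two_iff_lintegral_sq_lt_top {f : Ω → ℝ} (hf : AEStronglyMeasurable f μ) :
    MemLp f 2 μ ↔ ∫⁻ x, ENNReal.ofReal (f x ^ 2) ∂μ < ∞ := by
  rw [memLp_two_iff_integrable_sq hf, Integrable,
    hasFiniteIntegral_iff_ofReal (ae_of_all _ fun x => sq_nonneg (f x))]
  exact and_iff_right (hf.pow 2)

theorem integral_add_mul_sq {f g : Ω → ℝ} (hf : MemLp f 2 μ) (hg : MemLp g 2 μ) (t : ℝ) :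
    ∫ x, (f x + t * g x) ^ 2 ∂μ
      = ∫ x, f x ^ 2 ∂μ + 2 * t * ∫ x, f x * g x ∂μ + t ^ 2 * ∫ x, g x ^ 2 ∂μ := by
  have hff : Integrable (fun x => f x ^ 2) μ := hf.integrable_sq
  have hfg : Integrable (fun x => f x * g x) μ := hf.integrable_mul hg
  have hgg : Integrable (fun x => g x ^ 2) μ := hg.integrable_sq
  have hexp : (fun x => (f x + t * g x) ^ 2)
      = fun x => f x ^ 2 + 2 * t * (f x * g x) + t ^ 2 * g x ^ 2 := by
    ext x; ring
  have hA : Integrable (fun x => f x ^ 2 + 2 * t * (f x * g x)) μ := hff.add (hfg.const_mul _)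
  rw [hexp, integral_add hA (hgg.const_mul _),
    integral_add hff (hfg.const_mul _), integral_const_mul, integral_const_mul]

theorem abs_integral_mul_le_eLpNorm_mul_eLpNorm {f g : Ω → ℝ} (hf : MemLp f 2 μ)
    (hg : MemLp g 2 μ) :
    |∫ x, f x * g x ∂μ| ≤ (eLpNorm f 2 μ).toReal * (eLpNorm g 2 μ).toReal := by
  have hinner : ⟪hf.toLp f, hg.toLp g⟫ = ∫ x, f x * g x ∂μ := by
    rw [L2.inner_def]
    refine integral_congr_ae ?_
    filter_upwards [hf.coeFn_toLp, hg.coeFn_toLp] with x hfx hgx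
    simp [hfx, hgx, mul_comm]
  rw [← hinner, ← Lp.norm_toLp f hf, ← Lp.norm_toLp g hg]
  exact abs_real_inner_le_norm _ _

theorem integral_mul_eq_zero_of_forall_approx {z ψ : Ω → ℝ} (hz : MemLp z 2 μ)
    (hψ : MemLp ψ 2 μ)
    (happrox : ∀ ε > 0, ∃ φ, MemLp φ 2 μ ∧ ∫ x, z x * φ x ∂μ = 0 ∧
      eLpNorm (fun x => ψ x - φ x) 2 μ < ENNReal.ofReal ε) :
    ∫ x, z x * ψ x ∂μ = 0 := by
  set C := (eLpNorm z 2 μ).toReal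
  have hbound : ∀ ε > 0, |∫ x, z x * ψ x ∂μ| ≤ C * ε := by
    intro ε hε
    obtain ⟨φ, hφ, hzφ, hclose⟩ := happrox ε hε
    have hsplit : ∫ x, z x * ψ x ∂μ = ∫ x, z x * (ψ x - φ x) ∂μ := by
      have hzψ' : Integrable (fun x => z x * ψ x) μ := hz.integrable_mul hψ
      have hzφ' : Integrable (fun x => z x * φ x) μ := hz.integrable_mul hφ
      simp_rw [mul_sub]
      rw [integral_sub hzψ' hzφ', hzφ, sub_zero]
    calc |∫ x, z x * ψ x ∂μ|
        ≤ C * (eLpNorm (fun x => ψ x - φ x) 2 μ).toReal := by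
          rw [hsplit]; exact abs_integral_mul_le_eLpNorm_mul_eLpNorm hz (hψ.sub hφ)
      _ ≤ C * ε := by
          gcongr
          exact ENNReal.toReal_le_of_le_ofReal hε.le hclose.le
  have hlim : Tendsto (fun ε => C * ε) (𝓝[>] 0) (𝓝 0) := by
    simpa using ((continuous_const_mul C).tendsto 0).mono_left nhdsWithin_le_nhds
  exact abs_nonpos_iff.mp <|
    ge_of_tendsto hlim (eventually_nhdsWithin_of_forall fun ε hε => hbound ε hε)

end L2

theorem eq_zero_of_forall_abs_lt_quadratic_nonneg {I J δ : ℝ} (hδ : 0 < δ)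
    (h : ∀ t, |t| < δ → 0 ≤ 2 * t * I + t ^ 2 * J) : I = 0 := by
  have hmin : IsLocalMin (fun t => 2 * t * I + t ^ 2 * J) 0 := by
    filter_upwards [Metric.ball_mem_nhds 0 hδ] with t ht
    simpa using h t (by simpa using ht)
  have hderiv := (((hasDerivAt_id (0 : ℝ)).const_mul 2).mul_const I).add
    ((hasDerivAt_pow 2 (0 : ℝ)).mul_const J)
  simpa using hmin.hasDerivAt_eq_zero hderiv

section FiniteDimensional

variable {F : Type*} [NormedAddCommGroup F] [InnerProductSpace ℝ F] [MeasurableSpace F]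
  {K : Measure F}

theorem memLp_id_two_of_integrable_sq_norm [FiniteDimensional ℝ F] [BorelSpace F]
    (hsq : Integrable (fun x => ‖x‖ ^ 2) K) : MemLp id 2 K :=
  (memLp_two_iff_integrable_sq_norm aestronglyMeasurable_id).mpr hsq

theorem MeasureTheory.MemLp.integrable_smul_id {φ : F → ℝ} (hφ : MemLp φ 2 K)
    (hid : MemLp id 2 K) : Integrable (fun x => φ x • x) K :=
  memLp_one_iff_integrable.mp (hid.smul hφ)

def innerToLp (hid : MemLp id 2 K) : F →ₗ[ℝ] Lp ℝ 2 K where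
  toFun a := (innerSL ℝ a).compLp (hid.toLp id)
  map_add' a b := by rw [map_add, ContinuousLinearMap.add_compLp]
  map_smul' c a := by rw [map_smul, ContinuousLinearMap.smul_compLp]; rfl

theorem innerToLp_ae_eq (hid : MemLp id 2 K) (a : F) :
    innerToLp hid a =ᵐ[K] fun x => ⟪a, x⟫ := by
  filter_upwards [(innerSL ℝ a).coeFn_compLp (hid.toLp id), hid.coeFn_toLp] with x h1 h2
  simp [innerToLp, h1, h2]

theorem exists_ae_eq_inner_of_forall_integral_mul_eq_zero [FiniteDimensional ℝ F]
    (hid : MemLp id 2 K) {z : F → ℝ} (hz : MemLp z 2 K)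
    (horth : ∀ w : F → ℝ, MemLp w 2 K → ∫ x, w x • x ∂K = 0 → ∫ x, z x * w x ∂K = 0) :
    ∃ a : F, z =ᵐ[K] fun x => ⟪a, x⟫ := by
  set V := LinearMap.range (innerToLp hid)
  have hperp : ∀ w ∈ Vᗮ, ∫ x, w x • x ∂K = 0 := by
    intro w hw
    refine integral_eq_zero_of_forall_integral_inner_eq_zero ℝ _
      ((Lp.memLp w).integrable_smul_id hid) fun a => ?_
    have h0 : ⟪innerToLp hid a, w⟫ = 0 :=
      (Submodule.mem_orthogonal V w).mp hw _ (LinearMap.mem_range_self _ a)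
    rw [L2.inner_def] at h0
    rw [← h0]
    refine integral_congr_ae ?_
    filter_upwards [innerToLp_ae_eq hid a] with x hx
    simp [hx, inner_smul_right]
  have hzV : hz.toLp z ∈ Vᗮᗮ := by
    refine (Submodule.mem_orthogonal _ _).mpr fun w hw => ?_
    rw [L2.inner_def, ← horth w (Lp.memLp w) (hperp w hw)]
    refine integral_congr_ae ?_
    filter_upwards [hz.coeFn_toLp] with x hx
    simp [hx]
  rw [Submodule.orthogonal_orthogonal] at hzV
  obtain ⟨a, ha⟩ := hzV
  exact ⟨a, hz.coeFn_toLp.symm.trans (ha ▸ innerToLp_ae_eq hid a)⟩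

end FiniteDimensional

section LevyProblem

variable {d : ℕ} {b : E d} {c : Matrix (Fin d) (Fin d) ℝ} {K : Measure (E d)}

theorem gq_two (y : ℝ) : gq 2 y = (y - 1) ^ 2 := by
  rw [gq, show (2 : ℝ) = ((2 : ℕ) : ℝ) by norm_num, Real.rpow_natCast]
  push_cast
  ring

theorem zero_mv (v : E d) : mv 0 v = 0 := by
  simp [mv]

theorem kq_two_zero (β : E d) (Y : E d → ℝ) :
    kq 2 0 K β Y = ∫ x, (Y x - 1) ^ 2 ∂K := by
  simp [kq, zero_mv, gq_two]

theorem memA_two_iff {β : E d} {Y : E d → ℝ} :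
    memA 2 b c K β Y ↔ Measurable Y ∧ (∀ᵐ x ∂K, 0 < Y x) ∧ MCond b c K β Y ∧
      MemLp (fun x => Y x - 1) 2 K := by
  refine and_congr_right fun hY => and_congr_right' <| and_congr_right' ?_
  rw [memLp_two_iff_lintegral_sq_lt_top (f := fun x => Y x - 1)
    (hY.sub measurable_const).aestronglyMeasurable]
  simp only [gq_two]

theorem MCond.add_mul {β : E d} {Y Φ : E d → ℝ} (hM : MCond b c K β Y)
    (hΦx : Integrable (fun x => Φ x • x) K) (hΦ0 : ∫ x, Φ x • x ∂K = 0) (t : ℝ) :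
    MCond b c K β (fun x => Y x + t * Φ x) := by
  have hsplit : (fun x => (Y x + t * Φ x) • x - trunc x)
      = fun x => (Y x • x - trunc x) + t • (Φ x • x) := by
    ext x : 1
    rw [add_smul, mul_smul]
    abel
  have htΦx : Integrable (fun x => t • (Φ x • x)) K := hΦx.smul t
  refine ⟨hsplit ▸ hM.1.add htΦx, ?_⟩
  rw [hsplit, integral_add hM.1 htΦx, integral_smul, hΦ0, smul_zero, add_zero]
  exact hM.2

theorem MCond.congr_ae {β β' : E d} {Y Y' : E d → ℝ} (hM : MCond b 0 K β Y)
    (hY : Y =ᵐ[K] Y') : MCond b 0 K β' Y' := by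
  have hfun : (fun x => Y x • x - trunc x) =ᵐ[K] fun x => Y' x • x - trunc x := by
    filter_upwards [hY] with x hx
    rw [hx]
  refine ⟨hM.1.congr hfun, ?_⟩
  rw [zero_mv, ← integral_congr_ae hfun]
  simpa [zero_mv] using hM.2

theorem memA.add_mul {β : E d} {Y Φ : E d → ℝ} (hmem : memA 2 b c K β Y)
    (hsq : Integrable (fun x => ‖x‖ ^ 2) K) (hΦm : Measurable Φ) (hΦ : MemLp Φ 2 K)
    (hΦ0 : ∫ x, Φ x • x ∂K = 0) {a t : ℝ} (hb : ∀ᵐ x ∂K, |Φ x| ≤ a * Y x) (ht : |t| * a < 1) :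
    memA 2 b c K β (fun x => Y x + t * Φ x) := by
  obtain ⟨hYm, hpos, hM, hZ⟩ := memA_two_iff.mp hmem
  refine memA_two_iff.mpr ⟨hYm.add (measurable_const.mul hΦm), ?_,
    hM.add_mul (hΦ.integrable_smul_id (memLp_id_two_of_integrable_sq_norm hsq)) hΦ0 t, ?_⟩
  · filter_upwards [hpos, hb] with x hYx hΦx
    have hpert : |t * Φ x| ≤ |t| * a * Y x := by
      rw [abs_mul, mul_assoc]
      gcongr
    -- `Y + tΦ ≥ (1 - |t| a) Y > 0`
    nlinarith [neg_abs_le (t * Φ x), mul_pos (sub_pos.mpr ht) hYx]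
  · refine (hZ.add (hΦ.const_mul t)).ae_eq (ae_of_all _ fun x => ?_)
    simp only [Pi.add_apply]
    ring

theorem integral_sub_one_mul_eq_zero_of_isMinimizer {β₂ : E d} {Y₂ Φ : E d → ℝ}
    (hsq : Integrable (fun x => ‖x‖ ^ 2) K) (hmem : memA 2 b 0 K β₂ Y₂)
    (hmin : ∀ β Y, memA 2 b 0 K β Y → kq 2 0 K β₂ Y₂ ≤ kq 2 0 K β Y)
    (hΦ : MemLp Φ 2 K) (hΦ0 : ∫ x, Φ x • x ∂K = 0) {a : ℝ} (ha : 0 < a)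
    (hb : ∀ᵐ x ∂K, |Φ x| ≤ a * Y₂ x) :
    ∫ x, (Y₂ x - 1) * Φ x ∂K = 0 := by
  wlog hΦm : Measurable Φ generalizing Φ
  · have hΦ' := hΦ.aestronglyMeasurable.aemeasurable
    have heq := hΦ'.ae_eq_mk
    have hZΦ : ∫ x, (Y₂ x - 1) * Φ x ∂K = ∫ x, (Y₂ x - 1) * hΦ'.mk Φ x ∂K :=
      integral_congr_ae (heq.mono fun x hx => by simp only [hx])
    have hΦx : ∫ x, Φ x • x ∂K = ∫ x, hΦ'.mk Φ x • x ∂K :=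
      integral_congr_ae (heq.mono fun x hx => by simp only [hx])
    refine hZΦ ▸ this (hΦ.ae_eq heq) (hΦx ▸ hΦ0) ?_ hΦ'.measurable_mk
    filter_upwards [hb, heq] with x hx hx'
    rwa [← hx']
  have hZ := (memA_two_iff.mp hmem).2.2.2
  refine eq_zero_of_forall_abs_lt_quadratic_nonneg (J := ∫ x, Φ x ^ 2 ∂K) (inv_pos.mpr ha)
    fun t ht => ?_
  have hta : |t| * a < 1 := by
    simpa [ha.ne'] using mul_lt_mul_of_pos_right ht ha
  have hle := hmin β₂ _ (hmem.add_mul hsq hΦm hΦ hΦ0 hb hta)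
  simp only [kq_two_zero, add_sub_right_comm _ (t * _)] at hle
  rw [integral_add_mul_sq hZ hΦ t] at hle
  linarith

end LevyProblem

theorem stmt5_general (d : ℕ)
    (b : E d) (K : Measure (E d))
    (hsq : Integrable (fun x => ‖x‖ ^ 2) K)
    (β₂ : E d) (Y₂ : E d → ℝ)
    (hmem : memA 2 b (0 : Matrix (Fin d) (Fin d) ℝ) K β₂ Y₂)
    (hmin : ∀ β Y, memA 2 b (0 : Matrix (Fin d) (Fin d) ℝ) K β Y →
      kq 2 (0 : Matrix (Fin d) (Fin d) ℝ) K β₂ Y₂ ≤ kq 2 (0 : Matrix (Fin d) (Fin d) ℝ) K β Y)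
    -- condition (D)
    (hD : ∀ Ψ : E d → ℝ, MemLp Ψ 2 K → (∫ x, Ψ x • x ∂K = 0) → ∀ ε : ℝ, 0 < ε →
      ∃ Φ : E d → ℝ, MemLp Φ 2 K ∧ (∫ x, Φ x • x ∂K = 0) ∧
        (∃ a > 0, ∀ᵐ x ∂K, |Φ x| ≤ a * Y₂ x) ∧
        eLpNorm (fun x => Ψ x - Φ x) 2 K < ENNReal.ofReal ε) :
    ∃ α : E d, (∀ᵐ x ∂K, Y₂ x = ⟪α, x⟫ + 1) ∧ (∀ᵐ x ∂K, 0 < ⟪α, x⟫ + 1) ∧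
      MCond b (0 : Matrix (Fin d) (Fin d) ℝ) K α (fun x => ⟪α, x⟫ + 1) := by
  obtain ⟨-, hpos, hM, hZ⟩ := memA_two_iff.mp hmem
  have horth : ∀ Ψ : E d → ℝ, MemLp Ψ 2 K → ∫ x, Ψ x • x ∂K = 0 →
      ∫ x, (Y₂ x - 1) * Ψ x ∂K = 0 := fun Ψ hΨ hΨ0 =>
    integral_mul_eq_zero_of_forall_approx hZ hΨ fun ε hε => by
      obtain ⟨Φ, hΦ, hΦ0, ⟨a, ha, hb⟩, hclose⟩ := hD Ψ hΨ hΨ0 ε hε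
      exact ⟨Φ, hΦ,
        integral_sub_one_mul_eq_zero_of_isMinimizer hsq hmem hmin hΦ hΦ0 ha hb, hclose⟩
  obtain ⟨α, hα⟩ := exists_ae_eq_inner_of_forall_integral_mul_eq_zero
    (memLp_id_two_of_integrable_sq_norm hsq) hZ horth
  have hY : ∀ᵐ x ∂K, Y₂ x = ⟪α, x⟫ + 1 := by
    filter_upwards [hα] with x hx
    linarith
  refine ⟨α, hY, ?_, hM.congr_ae hY⟩
  filter_upwards [hpos, hY] with x hx hx'
  rwa [← hx']

/-- **Theorem 3.1, case 2**: let `∫ ‖x‖² K(dx) < ∞` and `c = 0`. If `(β₂, Y₂)`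
minimizes `k₂` over `A₂` and condition `(D)` holds (the set
`H¹(Y₂) = {Ψ ∈ L²(K) : ∫ Ψ(x) x K(dx) = 0, |Ψ| ≤ a Y₂ K-a.e. for some a > 0}` is
`L²(K)`-dense in `H² = {Ψ ∈ L²(K) : ∫ Ψ(x) x K(dx) = 0}`), then there is `α ∈ ℝ^d`
with `Y₂(x) = αᵀx + 1` `K`-a.e.; in particular `(C₂)` holds with `λ̃₂ = α`. -/
theorem stmt5 (d : ℕ) (hd : 1 ≤ d)
    (b : E d) (K : Measure (E d)) (hK : IsLevyMeasure K)
    (hsq : Integrable (fun x => ‖x‖ ^ 2) K)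
    (β₂ : E d) (Y₂ : E d → ℝ)
    (hmem : memA 2 b (0 : Matrix (Fin d) (Fin d) ℝ) K β₂ Y₂)
    (hmin : ∀ β Y, memA 2 b (0 : Matrix (Fin d) (Fin d) ℝ) K β Y →
      kq 2 (0 : Matrix (Fin d) (Fin d) ℝ) K β₂ Y₂ ≤ kq 2 (0 : Matrix (Fin d) (Fin d) ℝ) K β Y)
    -- condition (D)
    (hD : ∀ Ψ : E d → ℝ, MemLp Ψ 2 K → (∫ x, Ψ x • x ∂K = 0) → ∀ ε : ℝ, 0 < ε →
      ∃ Φ : E d → ℝ, MemLp Φ 2 K ∧ (∫ x, Φ x • x ∂K = 0) ∧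
        (∃ a > 0, ∀ᵐ x ∂K, |Φ x| ≤ a * Y₂ x) ∧
        eLpNorm (fun x => Ψ x - Φ x) 2 K < ENNReal.ofReal ε) :
    ∃ α : E d, (∀ᵐ x ∂K, Y₂ x = ⟪α, x⟫ + 1) ∧ (∀ᵐ x ∂K, 0 < ⟪α, x⟫ + 1) ∧
      MCond b (0 : Matrix (Fin d) (Fin d) ℝ) K α (fun x => ⟪α, x⟫ + 1) :=
  stmt5_general d b K hsq β₂ Y₂ hmem hmin hD
end
end
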